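/- arXiv:2604.25925 — 2 statements merged into one kernel-verified Lean document; each statement's English description precedes it below -/
import Mathlib

section
/- Per-prefix upper bound (key step in the proof of Lemma 5.1): For every conditionally i.i.d. coupling π of p^⊗K and q, every 1 ≤ i ≤ L, and every x^i ∈ Ω^i, the probability under π of the event that Y has length-i prefix x^i and at least one draft X_k has length-i prefix x^i is at most q(x^i)·[1 − (1 − min{p(x^i)/q(x^i), 1})^K] (the bound being 0 when q(x^i) = 0). -/
attribute [local instance] Classical.propDecidable

noncomputable section

/-- `s ∈ Ω^L` has the length-`i` prefix `x ∈ Ω^i`. -/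
def HasPref {Ω : Type*} {L i : ℕ} (s : Fin L → Ω) (x : Fin i → Ω) : Prop :=
  ∀ j : Fin L, ∀ hj : (j : ℕ) < i, s j = x ⟨(j : ℕ), hj⟩

/-- Mass of the length-`i` prefix `x` under the block distribution `p` on `Ω^L`. -/
def prefProb {Ω : Type*} [Fintype Ω] {L i : ℕ} (p : (Fin L → Ω) → ℝ) (x : Fin i → Ω) : ℝ :=
  ∑ s : Fin L → Ω, if HasPref s x then p s else 0

/-- `Bound(K) = Σ_{i=1}^{L} Σ_{x^i ∈ Ω^i} q(x^i)·[1 − (1 − min{p(x^i)/q(x^i), 1})^K]`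
(the summand with `q(x^i) = 0` is automatically `0`). -/
def Bound {Ω : Type*} [Fintype Ω] {L : ℕ} (p q : (Fin L → Ω) → ℝ) (K : ℕ) : ℝ :=
  ∑ i ∈ Finset.range L, ∑ x : Fin (i + 1) → Ω,
    prefProb q x * (1 - (1 - min (prefProb p x / prefProb q x) 1) ^ K)

/-- `π` is a coupling of `p^{⊗K}` and `q`: a pmf on `(Ω^L)^K × Ω^L` whose
`(X_1, …, X_K)`-marginal is the `K`-fold product of `p` and whose `Y`-marginal is `q`. -/
def IsCoupling {Ω : Type*} [Fintype Ω] {L K : ℕ} (p q : (Fin L → Ω) → ℝ)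
    (π : (Fin K → Fin L → Ω) × (Fin L → Ω) → ℝ) : Prop :=
  (∀ z, 0 ≤ π z) ∧
  (∀ X : Fin K → Fin L → Ω, ∑ y : Fin L → Ω, π (X, y) = ∏ k : Fin K, p (X k)) ∧
  (∀ y : Fin L → Ω, ∑ X : Fin K → Fin L → Ω, π (X, y) = q y)

/-- `π` is a conditionally i.i.d. coupling of `p^{⊗K}` and `q`: there is a kernel `κ`
from `Ω^L` to pmfs on `Ω^L` with `π(x_1, …, x_K, y) = q(y)·Π_k κ(y)(x_k)`. -/
def IsCondIIDCoupling {Ω : Type*} [Fintype Ω] {L K : ℕ} (p q : (Fin L → Ω) → ℝ)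
    (π : (Fin K → Fin L → Ω) × (Fin L → Ω) → ℝ) : Prop :=
  IsCoupling p q π ∧
  ∃ κ : (Fin L → Ω) → (Fin L → Ω) → ℝ,
    (∀ y x, 0 ≤ κ y x) ∧ (∀ y, ∑ x : Fin L → Ω, κ y x = 1) ∧
    (∀ X : Fin K → Fin L → Ω, ∀ y : Fin L → Ω, π (X, y) = q y * ∏ k : Fin K, κ y (X k))

/-- Acceptance length `τ(x_1, …, x_K, y)`: the largest `i ∈ {0, …, L}` such that
some draft `x_k` agrees with `y` on the first `i` coordinates. -/
def accLen {Ω : Type*} {L K : ℕ} (X : Fin K → Fin L → Ω) (y : Fin L → Ω) : ℕ :=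
  ((Finset.range (L + 1)).filter
    (fun i => ∃ k : Fin K, ∀ j : Fin L, (j : ℕ) < i → X k j = y j)).sup id

/-! Conditioning on `Y = y`, the drafts are i.i.d. with law `κ y`, so the event has probability
`Σ_{y ⊒ x} q(y) (1 - (1 - a(y))^K)` with `a(y) = κ y (x)`, the `κ y`-mass of the prefix. The map
`t ↦ 1 - (1 - t)^K` is concave and nondecreasing on `(-∞, 1]`, and averaging the marginal
identity `Σ_y q(y) κ y = p` gives `Σ_{y ⊒ x} q(y) a(y) ≤ min (p(x), q(x))`; the tangent line at
`m = min (p(x)/q(x), 1)` then yields the bound. -/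

open Finset

theorem pow_add_mul_sub_le_pow {R : Type*} [CommRing R] [LinearOrder R] [IsStrictOrderedRing R]
    {u v : R} (hu : 0 ≤ u) (hv : 0 ≤ v) (n : ℕ) :
    v ^ (n + 1) + (n + 1) * v ^ n * (u - v) ≤ u ^ (n + 1) := by
  induction n with
  | zero => simp
  | succ n ih =>
    have hsq : 0 ≤ (n + 1) * v ^ n * (u - v) ^ 2 := by positivity
    calc _ = u * (v ^ (n + 1) + (n + 1) * v ^ n * (u - v)) - (n + 1) * v ^ n * (u - v) ^ 2 := by
          push_cast; ring
      _ ≤ u * u ^ (n + 1) := by nlinarith [mul_le_mul_of_nonneg_left ih hu]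
      _ = u ^ (n + 1 + 1) := by ring

theorem sum_mul_one_sub_one_sub_pow_le {ι R : Type*} [CommRing R] [LinearOrder R]
    [IsStrictOrderedRing R] {s : Finset ι} {w a : ι → R} {m : R}
    (hw : ∀ i ∈ s, 0 ≤ w i) (ha : ∀ i ∈ s, a i ≤ 1) (hm : m ≤ 1)
    (hsum : ∑ i ∈ s, w i * a i ≤ m * ∑ i ∈ s, w i) (n : ℕ) :
    ∑ i ∈ s, w i * (1 - (1 - a i) ^ (n + 1)) ≤ (∑ i ∈ s, w i) * (1 - (1 - m) ^ (n + 1)) := by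
  set c : R := (n + 1) * (1 - m) ^ n
  have hc : 0 ≤ c := by have := sub_nonneg.2 hm; positivity
  have tangent : ∀ i ∈ s, w i * (1 - (1 - a i) ^ (n + 1))
      ≤ w i * (1 - (1 - m) ^ (n + 1)) + c * (w i * a i - m * w i) := fun i hi => by
    have := pow_add_mul_sub_le_pow (sub_nonneg.2 (ha i hi)) (sub_nonneg.2 hm) n
    nlinarith [mul_le_mul_of_nonneg_left this (hw i hi)]
  calc ∑ i ∈ s, w i * (1 - (1 - a i) ^ (n + 1))
      ≤ ∑ i ∈ s, (w i * (1 - (1 - m) ^ (n + 1)) + c * (w i * a i - m * w i)) :=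
        sum_le_sum tangent
    _ = (∑ i ∈ s, w i) * (1 - (1 - m) ^ (n + 1))
          + c * (∑ i ∈ s, w i * a i - m * ∑ i ∈ s, w i) := by
        rw [sum_add_distrib, ← sum_mul, ← mul_sum, sum_sub_distrib, ← mul_sum]
    _ ≤ (∑ i ∈ s, w i) * (1 - (1 - m) ^ (n + 1)) :=
        add_le_of_nonpos_right (mul_nonpos_of_nonneg_of_nonpos hc (sub_nonpos.2 hsum))

theorem le_min_div_one_mul {R : Type*} [Field R] [LinearOrder R] [IsStrictOrderedRing R]
    {t a b : R} (hb : 0 ≤ b) (hta : t ≤ a) (htb : t ≤ b) : t ≤ min (a / b) 1 * b := by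
  rcases hb.eq_or_lt with rfl | hb
  · simpa using htb
  · rw [min_mul_of_nonneg _ _ hb.le, div_mul_cancel₀ _ hb.ne', one_mul]
    exact le_min hta htb

section ProductSums

variable {ι α R : Type*} [Fintype ι] [Fintype α]

theorem sum_ite_apply_eq_prod_eq [CommSemiring R] {f : α → R} (hf : ∑ u, f u = 1) (k₀ : ι) (s : α) :
    ∑ X : ι → α, (if X k₀ = s then ∏ k, f (X k) else 0) = f s := by
  calc ∑ X : ι → α, (if X k₀ = s then ∏ k, f (X k) else 0)
      = ∑ X ∈ Fintype.piFinset (Function.update (fun _ => (univ : Finset α)) k₀ {s}),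
          ∏ k, f (X k) := by
        rw [Fintype.piFinset_update_singleton_eq_filter_piFinset_eq
          (fun _ : ι => (univ : Finset α)) k₀ (mem_univ s), Fintype.piFinset_univ, sum_filter]
    _ = f s := by
        rw [← prod_univ_sum, prod_eq_single k₀ (fun k _ hk => by simp [hk, hf]) (by simp)]
        simp

theorem sum_ite_exists_prod_eq [CommRing R] {f : α → R} (hf : ∑ u, f u = 1) (P : α → Prop) :
    ∑ X : ι → α, (if ∃ k, P (X k) then ∏ k, f (X k) else 0)
      = 1 - (1 - ∑ u, if P u then f u else 0) ^ Fintype.card ι := by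
  have hcompl : ∑ u, (if P u then 0 else f u) = 1 - ∑ u, if P u then f u else 0 := by
    rw [← hf, ← sum_sub_distrib]
    exact sum_congr rfl fun u _ => by split_ifs <;> simp
  have hsplit : ∀ X : ι → α, (if ∃ k, P (X k) then ∏ k, f (X k) else 0)
      = ∏ k, f (X k) - ∏ k, (if P (X k) then 0 else f (X k)) := fun X => by
    by_cases h : ∃ k, P (X k)
    · obtain ⟨k, hk⟩ := h
      have hzero : ∏ k, (if P (X k) then 0 else f (X k)) = 0 :=
        prod_eq_zero (mem_univ k) (if_pos hk)
      rw [if_pos ⟨k, hk⟩, hzero, sub_zero]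
    · push Not at h
      simp [h]
  rw [sum_congr rfl fun X _ => hsplit X, sum_sub_distrib, ← Fintype.prod_sum,
    ← Fintype.prod_sum (fun _ u => if P u then 0 else f u), hcompl, hf, prod_const_one,
    prod_const, card_univ]

theorem sum_mul_sum_ite_eq_of_factor [CommSemiring R] {p q : α → R} {π : (ι → α) × α → R}
    {κ : α → α → R} (k₀ : ι) (hp1 : ∑ s, p s = 1)
    (hmarg : ∀ X : ι → α, ∑ y, π (X, y) = ∏ k, p (X k)) (hκ1 : ∀ y, ∑ s, κ y s = 1)
    (hfac : ∀ X y, π (X, y) = q y * ∏ k, κ y (X k)) (P : α → Prop) :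
    ∑ y, q y * ∑ s, (if P s then κ y s else 0) = ∑ s, if P s then p s else 0 := by
  have hsingle : ∀ s, ∑ y, q y * κ y s = p s := fun s => calc
    ∑ y, q y * κ y s = ∑ y, q y * ∑ X : ι → α, (if X k₀ = s then ∏ k, κ y (X k) else 0) :=
        sum_congr rfl fun y _ => by rw [sum_ite_apply_eq_prod_eq (hκ1 y)]
    _ = ∑ X : ι → α, (if X k₀ = s then ∑ y, π (X, y) else 0) := by
        simp only [hfac, mul_sum, mul_ite, mul_zero]
        rw [sum_comm]
        exact sum_congr rfl fun X _ => by split_ifs <;> simp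
    _ = p s := by simp only [hmarg, sum_ite_apply_eq_prod_eq hp1]
  simp only [← sum_filter, mul_sum]
  rw [sum_comm]
  exact sum_congr rfl fun s _ => hsingle s

theorem sum_ite_and_exists_eq_of_factor [CommRing R] {q : α → R} {π : (ι → α) × α → R}
    {κ : α → α → R} (hκ1 : ∀ y, ∑ s, κ y s = 1)
    (hfac : ∀ X y, π (X, y) = q y * ∏ k, κ y (X k)) (P : α → Prop) :
    ∑ z : (ι → α) × α, (if P z.2 ∧ ∃ k, P (z.1 k) then π z else 0)
      = ∑ y, if P y then q y * (1 - (1 - ∑ s, if P s then κ y s else 0) ^ Fintype.card ι)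
        else 0 := by
  rw [Fintype.sum_prod_type, sum_comm]
  refine sum_congr rfl fun y _ => ?_
  by_cases hy : P y
  · simp only [hy, true_and, if_true, hfac, ← sum_ite_exists_prod_eq (hκ1 y), mul_sum, mul_ite,
      mul_zero]
  · simp [hy]

end ProductSums

theorem prefProb_eq_sum_filter {Ω : Type*} [Fintype Ω] {L i : ℕ} (p : (Fin L → Ω) → ℝ)
    (x : Fin i → Ω) : prefProb p x = ∑ s with HasPref s x, p s :=
  (sum_filter _ _).symm

theorem prefProb_nonneg {Ω : Type*} [Fintype Ω] {L i : ℕ} {p : (Fin L → Ω) → ℝ}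
    (hp0 : ∀ s, 0 ≤ p s) (x : Fin i → Ω) : 0 ≤ prefProb p x :=
  sum_nonneg fun s _ => by split_ifs <;> simp [hp0]

theorem prefProb_le_one {Ω : Type*} [Fintype Ω] {L i : ℕ} {p : (Fin L → Ω) → ℝ}
    (hp0 : ∀ s, 0 ≤ p s) (hp1 : ∑ s, p s = 1) (x : Fin i → Ω) : prefProb p x ≤ 1 :=
  hp1 ▸ sum_le_sum fun s _ => by split_ifs <;> simp [hp0]

theorem per_prefix_upper_bound_general
    {Ω : Type*} [Fintype Ω] {L K : ℕ} (hK : 1 ≤ K)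
    (p q : (Fin L → Ω) → ℝ)
    (hp1 : ∑ s : Fin L → Ω, p s = 1)
    (hq0 : ∀ s, 0 ≤ q s)
    (π : (Fin K → Fin L → Ω) × (Fin L → Ω) → ℝ)
    (hπ : IsCondIIDCoupling p q π)
    (i : ℕ) (x : Fin i → Ω) :
    (∑ z : (Fin K → Fin L → Ω) × (Fin L → Ω),
        if HasPref z.2 x ∧ (∃ k : Fin K, HasPref (z.1 k) x) then π z else 0)
      ≤ prefProb q x * (1 - (1 - min (prefProb p x / prefProb q x) 1) ^ K) := by
  obtain ⟨⟨-, hmarg, -⟩, κ, hκ0, hκ1, hfac⟩ := hπ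
  obtain ⟨n, rfl⟩ := Nat.exists_eq_add_of_le' hK
  have hκx : ∀ y, prefProb (κ y) x ≤ 1 := fun y => prefProb_le_one (hκ0 y) (hκ1 y) x
  have hmass : ∑ y with HasPref y x, q y * prefProb (κ y) x
      ≤ min (prefProb p x / prefProb q x) 1 * prefProb q x := by
    refine le_min_div_one_mul (prefProb_nonneg hq0 x) ?_ ?_
    · calc _ ≤ ∑ y, q y * prefProb (κ y) x :=
            sum_le_univ_sum_of_nonneg fun y => mul_nonneg (hq0 y) (prefProb_nonneg (hκ0 y) x)
        _ = prefProb p x := sum_mul_sum_ite_eq_of_factor 0 hp1 hmarg hκ1 hfac _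
    · rw [prefProb_eq_sum_filter]
      exact sum_le_sum fun y _ => mul_le_of_le_one_right (hq0 y) (hκx y)
  rw [prefProb_eq_sum_filter q] at hmass ⊢
  calc _ = ∑ y with HasPref y x, q y * (1 - (1 - prefProb (κ y) x) ^ (n + 1)) := by
        rw [sum_filter]
        -- `convert` reconciles the `Decidable` instance of `∃ k : Fin (n + 1), _` with the
        -- generic one of the lemma
        convert sum_ite_and_exists_eq_of_factor hκ1 hfac (HasPref · x) using 6
        · rfl
        · simp
    _ ≤ _ := sum_mul_one_sub_one_sub_pow_le (fun y _ => hq0 y) (fun y _ => hκx y)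
        (min_le_right _ _) hmass n

/-- Per-prefix upper bound (key step in the proof of Lemma 5.1): for every
conditionally i.i.d. coupling `π`, every `1 ≤ i ≤ L` and every `x^i ∈ Ω^i`, the
probability that `Y` has prefix `x^i` and some draft `X_k` has prefix `x^i` is at
most `q(x^i)·[1 − (1 − min{p(x^i)/q(x^i), 1})^K]`. -/
theorem per_prefix_upper_bound
    {Ω : Type*} [Fintype Ω] [Nonempty Ω] {L K : ℕ} (hL : 1 ≤ L) (hK : 1 ≤ K)
    (p q : (Fin L → Ω) → ℝ)
    (hp0 : ∀ s, 0 ≤ p s) (hp1 : ∑ s : Fin L → Ω, p s = 1)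
    (hq0 : ∀ s, 0 ≤ q s) (hq1 : ∑ s : Fin L → Ω, q s = 1)
    (π : (Fin K → Fin L → Ω) × (Fin L → Ω) → ℝ)
    (hπ : IsCondIIDCoupling p q π)
    (i : ℕ) (hi1 : 1 ≤ i) (hiL : i ≤ L) (x : Fin i → Ω) :
    (∑ z : (Fin K → Fin L → Ω) × (Fin L → Ω),
        if HasPref z.2 x ∧ (∃ k : Fin K, HasPref (z.1 k) x) then π z else 0)
      ≤ prefProb q x * (1 - (1 - min (prefProb p x / prefProb q x) 1) ^ K) :=
  per_prefix_upper_bound_general hK p q hp1 hq0 π hπ i x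
end
end

section
/- The sub-block acceptance probability h_{ik} of Eq. (1) lies in [0,1]: Let T be a finite index set, (p_t)_{t∈T} and (q_t)_{t∈T} nonnegative reals with P := Σ_t p_t ≤ 1 and 0 < Q := Σ_t q_t ≤ 1, and K ≥ 1 an integer. Set A := Σ_{t∈T} q_t·(1 − min{p_t/q_t, 1})^K (summands with q_t = 0 taken as 0), B := Q·(1 − min{P/Q, 1})^K, and M := 1 − (1 − P)^K. Then 0 ≤ A − B ≤ M − Q + A; consequently, if M − Q + A > 0, the quantity h := (A − B)/(M − Q + A) satisfies 0 ≤ h ≤ 1. -/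
/-!
The function `f x = (1 - min x 1) ^ K` is convex and antitone. Then `B ≤ A` is Jensen's inequality
for `f` with weights `q_t / Q` at the points `p_t / q_t`, whose mean is at most `P / Q`, and
`Q - M ≤ B` is convexity of `f` on the segment from `0` to `P / Q`:
`(1 - P) ^ K = f (Q • (P / Q)) ≤ (1 - Q) f 0 + Q f (P / Q) = 1 - Q + B`.
-/

open Finset

lemma convexOn_one_sub_min_one_pow (K : ℕ) :
    ConvexOn ℝ Set.univ fun x : ℝ => (1 - min x 1) ^ K :=
  ((convexOn_const 1 convex_univ).sub
      ((concaveOn_id convex_univ).inf (concaveOn_const 1 convex_univ))).pow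
    (fun x _ => sub_nonneg.2 (min_le_right x 1)) K

lemma antitone_one_sub_min_one_pow (K : ℕ) : Antitone fun x : ℝ => (1 - min x 1) ^ K :=
  fun _ _ hxy => pow_le_pow_left₀ (sub_nonneg.2 (min_le_right _ _))
    (sub_le_sub_left (min_le_min_right 1 hxy) 1) K

theorem ConvexOn.mul_map_sum_div_sum_le_sum_mul_map_div {ι : Type*} {s : Finset ι}
    {f : ℝ → ℝ} (hf : ConvexOn ℝ Set.univ f) (hf_anti : Antitone f) {p q : ι → ℝ}
    (hp : ∀ i ∈ s, 0 ≤ p i) (hq : ∀ i ∈ s, 0 ≤ q i) (hQ : 0 < ∑ i ∈ s, q i) :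
    (∑ i ∈ s, q i) * f ((∑ i ∈ s, p i) / ∑ i ∈ s, q i) ≤ ∑ i ∈ s, q i * f (p i / q i) := by
  have jensen := hf.map_centerMass_le hq hQ fun i _ => Set.mem_univ (p i / q i)
  simp only [centerMass, smul_eq_mul, Function.comp_def, ← div_eq_inv_mul] at jensen
  -- Where `q i = 0`, the junk value `p i / 0 = 0` drops `p i` from the mean; `f` is antitone.
  have hcancel : ∑ i ∈ s, q i * (p i / q i) ≤ ∑ i ∈ s, p i := sum_le_sum fun i hi => by
    rcases (hq i hi).eq_or_lt with h | h
    · simp [← h, hp i hi]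
    · rw [mul_div_cancel₀ _ h.ne']
  rw [← le_div_iff₀' hQ]
  exact (hf_anti (div_le_div_of_nonneg_right hcancel hQ.le)).trans jensen

theorem ConvexOn.map_mul_le {f : ℝ → ℝ} (hf : ConvexOn ℝ Set.univ f) {a : ℝ} (ha₀ : 0 ≤ a)
    (ha₁ : a ≤ 1) (x : ℝ) : f (a * x) ≤ (1 - a) * f 0 + a * f x := by
  simpa using hf.2 (Set.mem_univ 0) (Set.mem_univ x) (sub_nonneg.2 ha₁) ha₀ (by ring)

theorem hik_valid_general {T : Type*} [Fintype T] (p q : T → ℝ)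
    (hp : ∀ t, 0 ≤ p t) (hq : ∀ t, 0 ≤ q t)
    (hP1 : (∑ t, p t) ≤ 1) (hQ0 : 0 < ∑ t, q t) (hQ1 : (∑ t, q t) ≤ 1)
    (K : ℕ)
    (A B M : ℝ)
    (hA : A = ∑ t, q t * (1 - min (p t / q t) 1) ^ K)
    (hB : B = (∑ t, q t) * (1 - min ((∑ t, p t) / (∑ t, q t)) 1) ^ K)
    (hM : M = 1 - (1 - ∑ t, p t) ^ K) :
    0 ≤ A - B ∧ A - B ≤ M - (∑ t, q t) + A ∧
    (0 < M - (∑ t, q t) + A →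
      0 ≤ (A - B) / (M - (∑ t, q t) + A) ∧ (A - B) / (M - (∑ t, q t) + A) ≤ 1) := by
  have hBA : B ≤ A := by
    rw [hA, hB]
    exact (convexOn_one_sub_min_one_pow K).mul_map_sum_div_sum_le_sum_mul_map_div
      (antitone_one_sub_min_one_pow K) (fun t _ => hp t) (fun t _ => hq t) hQ0
  have hQM : (∑ t, q t) - M ≤ B := by
    have := (convexOn_one_sub_min_one_pow K).map_mul_le hQ0.le hQ1 ((∑ t, p t) / ∑ t, q t)
    rw [mul_div_cancel₀ _ hQ0.ne', min_eq_left hP1] at this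
    simp only [min_eq_left zero_le_one, sub_zero, one_pow, mul_one] at this
    rw [hB, hM]
    linarith
  refine ⟨sub_nonneg.2 hBA, by linarith, fun hpos => ⟨div_nonneg (sub_nonneg.2 hBA) hpos.le, ?_⟩⟩
  rw [div_le_one hpos]
  linarith

/-- The sub-block acceptance probability `h_{ik}` of Eq. (1) lies in `[0,1]`:
with `A := Σ_t q_t·(1 − min{p_t/q_t, 1})^K`, `B := Q·(1 − min{P/Q, 1})^K` and
`M := 1 − (1 − P)^K`, one has `0 ≤ A − B ≤ M − Q + A`; consequently if
`M − Q + A > 0`, then `h := (A − B)/(M − Q + A) ∈ [0, 1]`. -/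
theorem hik_valid {T : Type*} [Fintype T] (p q : T → ℝ)
    (hp : ∀ t, 0 ≤ p t) (hq : ∀ t, 0 ≤ q t)
    (hP1 : (∑ t, p t) ≤ 1) (hQ0 : 0 < ∑ t, q t) (hQ1 : (∑ t, q t) ≤ 1)
    (K : ℕ) (hK : 1 ≤ K)
    (A B M : ℝ)
    (hA : A = ∑ t, q t * (1 - min (p t / q t) 1) ^ K)
    (hB : B = (∑ t, q t) * (1 - min ((∑ t, p t) / (∑ t, q t)) 1) ^ K)
    (hM : M = 1 - (1 - ∑ t, p t) ^ K) :
    0 ≤ A - B ∧ A - B ≤ M - (∑ t, q t) + A ∧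
    (0 < M - (∑ t, q t) + A →
      0 ≤ (A - B) / (M - (∑ t, q t) + A) ∧ (A - B) / (M - (∑ t, q t) + A) ≤ 1) :=
  hik_valid_general p q hp hq hP1 hQ0 hQ1 K A B M hA hB hM
end
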